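/- arXiv:1209.1165 — 2 statements merged into one kernel-verified Lean document; each statement's English description precedes it below -/
import Mathlib

section
/- Let K ≥ 1, let u be a continuously differentiable map from an open neighborhood of the closed unit disk D̄ into ℝ^K, and let α > 1. Suppose u is critical for the α-energy under inner variations by disk automorphisms, i.e. for every β : ℝ → ℂ differentiable at 0 with β(0) = 0, the function t ↦ E_α(u ∘ φ_{β(t)}) is differentiable at t = 0 with derivative 0. Then ∫_D ( −(1 + |∇u(z)|²)^α + α(1 + |∇u(z)|²)^{α−1}|∇u(z)|² )·z dA(z) = 0. -/
/-!
Substituting `z = φ_{-β}(w)` and using that `φ_β` is conformal turns `E_α(u ∘ φ_β)` into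
`∫_D J (1 + |∇u|² / J)^α` with the Jacobian `J = |φ'_{-β}|²`, so along `β = t c` the parameter
enters only through the weight `J`. Differentiating under the integral at `t = 0`, where `J = 1`
and `∂ₜ J = -4 Re(c̄ w)`, criticality gives `∫_D Re(c̄ w) k(w) dA = 0` for every `c ∈ ℂ`, `k` being
the real factor of the integrand in the claim. Taking `c = ∫_D k(z) z dA` shows that this integral
has modulus zero.
-/

/-- The Möbius transformation `φ_β(z) = (z − β)/(1 − conj β · z)`. -/
noncomputable def phi (β z : ℂ) : ℂ := (z - β) / (1 - (starRingEnd ℂ) β * z)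

/-- `|∇u(z)|² = |∂u/∂x(z)|² + |∂u/∂y(z)|²` for a map `u : ℂ → ℝ^K`,
identifying `ℂ` with `ℝ²` via `z = x + iy`. -/
noncomputable def gradSq {K : ℕ} (u : ℂ → EuclideanSpace ℝ (Fin K)) (z : ℂ) : ℝ :=
  ‖fderiv ℝ u z 1‖ ^ 2 + ‖fderiv ℝ u z Complex.I‖ ^ 2

open Complex ComplexConjugate MeasureTheory Metric Set

noncomputable def phiDeriv (β z : ℂ) : ℂ := (1 - normSq β) / (1 - conj β * z) ^ 2

theorem one_sub_conj_mul_ne_zero {β z : ℂ} (hβ : ‖β‖ < 1) (hz : ‖z‖ ≤ 1) :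
    1 - conj β * z ≠ 0 := by
  rw [sub_ne_zero]
  intro h
  have := congrArg norm h
  rw [norm_one, norm_mul, Complex.norm_conj] at this
  nlinarith [norm_nonneg β, norm_nonneg z]

theorem normSq_one_sub_conj_mul_sub_normSq_sub (β z : ℂ) :
    normSq (1 - conj β * z) - normSq (z - β) = (1 - normSq β) * (1 - normSq z) := by
  simp only [normSq_apply, sub_re, sub_im, one_re, one_im, mul_re, mul_im, conj_re, conj_im]
  ring

theorem norm_phi_lt_one {β z : ℂ} (hβ : ‖β‖ < 1) (hz : ‖z‖ < 1) : ‖phi β z‖ < 1 := by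
  have hd := one_sub_conj_mul_ne_zero hβ hz.le
  rw [phi, norm_div, div_lt_one (norm_pos_iff.mpr hd), ← sq_lt_sq₀ (norm_nonneg _) (norm_nonneg _),
    ← normSq_eq_norm_sq, ← normSq_eq_norm_sq, ← sub_pos,
    normSq_one_sub_conj_mul_sub_normSq_sub, normSq_eq_norm_sq, normSq_eq_norm_sq]
  nlinarith [norm_nonneg β, norm_nonneg z, mul_pos (sub_pos.2 hβ) (sub_pos.2 hz)]

theorem phi_neg_phi {β z : ℂ} (hβ : normSq β ≠ 1) (hz : 1 - conj β * z ≠ 0) :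
    phi (-β) (phi β z) = z := by
  have hβ' : (1 : ℂ) - normSq β ≠ 0 := by
    rw [sub_ne_zero]; exact_mod_cast hβ.symm
  have key : conj β * β = normSq β := by rw [normSq_eq_conj_mul_self]
  have hnum : phi β z - -β = z * ((1 - normSq β) / (1 - conj β * z)) := by
    rw [phi, sub_neg_eq_add, div_add' _ _ _ hz, mul_div_assoc']
    congr 1
    linear_combination (-z) * key
  have hden : 1 - conj (-β) * phi β z = (1 - normSq β) / (1 - conj β * z) := by
    rw [phi, map_neg, neg_mul, sub_neg_eq_add, mul_div_assoc', one_add_div hz]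
    congr 1
    linear_combination (-1 : ℂ) * key
  rw [phi, hnum, hden, mul_div_cancel_right₀ _ (div_ne_zero hβ' hz)]

theorem hasDerivAt_phi (β : ℂ) {z : ℂ} (hz : 1 - conj β * z ≠ 0) :
    HasDerivAt (phi β) (phiDeriv β z) z := by
  have h := ((hasDerivAt_id z).sub_const β).div
    (((hasDerivAt_id z).const_mul (conj β)).const_sub 1) hz
  refine h.congr_deriv ?_
  rw [phiDeriv, normSq_eq_conj_mul_self]
  simp only [id_eq, one_mul, mul_one, mul_neg, sub_neg_eq_add]
  ring

theorem phiDeriv_ne_zero {β z : ℂ} (hβ : normSq β ≠ 1) (hz : 1 - conj β * z ≠ 0) :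
    phiDeriv β z ≠ 0 :=
  div_ne_zero (sub_ne_zero.2 (by exact_mod_cast hβ.symm)) (pow_ne_zero 2 hz)

theorem normSq_phiDeriv_zero (z : ℂ) : normSq (phiDeriv 0 z) = 1 := by
  simp [phiDeriv]

theorem normSq_ne_one_of_norm_lt_one {β : ℂ} (hβ : ‖β‖ < 1) : normSq β ≠ 1 := by
  rw [normSq_eq_norm_sq]
  nlinarith [norm_nonneg β]

theorem mapsTo_phi {β : ℂ} (hβ : ‖β‖ < 1) : MapsTo (phi β) (ball 0 1) (ball 0 1) :=
  fun _ hz => mem_ball_zero_iff.2 (norm_phi_lt_one hβ (mem_ball_zero_iff.1 hz))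

theorem invOn_phi {β : ℂ} (hβ : ‖β‖ < 1) : InvOn (phi (-β)) (phi β) (ball 0 1) (ball 0 1) := by
  have hβ' : ‖-β‖ < 1 := by rwa [norm_neg]
  constructor <;> intro z hz <;> rw [mem_ball_zero_iff] at hz
  · exact phi_neg_phi (normSq_ne_one_of_norm_lt_one hβ) (one_sub_conj_mul_ne_zero hβ hz.le)
  · simpa using phi_neg_phi (normSq_ne_one_of_norm_lt_one hβ') (one_sub_conj_mul_ne_zero hβ' hz.le)

theorem bijOn_phi {β : ℂ} (hβ : ‖β‖ < 1) : BijOn (phi β) (ball 0 1) (ball 0 1) :=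
  (invOn_phi hβ).bijOn (mapsTo_phi hβ) (mapsTo_phi (by rwa [norm_neg]))

theorem norm_sq_apply_add_norm_sq_apply_I_mul {E : Type*} [NormedAddCommGroup E]
    [InnerProductSpace ℝ E] (L : ℂ →L[ℝ] E) (c : ℂ) :
    ‖L c‖ ^ 2 + ‖L (I * c)‖ ^ 2 = normSq c * (‖L 1‖ ^ 2 + ‖L I‖ ^ 2) := by
  have hc : L c = c.re • L 1 + c.im • L I := by
    rw [← L.map_smul, ← L.map_smul, ← map_add]; congr 1; apply Complex.ext <;> simp
  have hIc : L (I * c) = (-c.im) • L 1 + c.re • L I := by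
    rw [← L.map_smul, ← L.map_smul, ← map_add]; congr 1; apply Complex.ext <;> simp
  rw [hc, hIc, norm_add_sq_real, norm_add_sq_real, inner_smul_left, inner_smul_left,
    inner_smul_right, inner_smul_right, norm_smul, norm_smul, norm_smul, norm_smul]
  simp only [Real.norm_eq_abs, mul_pow, sq_abs, normSq_apply, conj_trivial]
  ring

theorem gradSq_comp_of_hasDerivAt {K : ℕ} (u : ℂ → EuclideanSpace ℝ (Fin K)) {φ : ℂ → ℂ} {z d : ℂ}
    (hφ : HasDerivAt φ d z) (hu : DifferentiableAt ℝ u (φ z)) :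
    gradSq (fun w => u (φ w)) z = normSq d * gradSq u (φ z) := by
  have hcomp := hu.hasFDerivAt.comp z (hφ.hasFDerivAt.restrictScalars ℝ)
  rw [gradSq, gradSq, show (fun w => u (φ w)) = u ∘ φ from rfl, hcomp.fderiv]
  simpa [mul_comm d] using norm_sq_apply_add_norm_sq_apply_I_mul (fderiv ℝ u (φ z)) d

theorem gradSq_nonneg {K : ℕ} (u : ℂ → EuclideanSpace ℝ (Fin K)) (z : ℂ) : 0 ≤ gradSq u z := by
  unfold gradSq; positivity

theorem continuousOn_gradSq {K : ℕ} {u : ℂ → EuclideanSpace ℝ (Fin K)} {V : Set ℂ}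
    (hV : IsOpen V) (hu : ContDiffOn ℝ 1 u V) : ContinuousOn (gradSq u) V := by
  have hu' := hu.continuousOn_fderiv_of_isOpen hV le_rfl
  unfold gradSq
  fun_prop

theorem det_restrictScalars_toSpanSingleton (c : ℂ) :
    ((ContinuousLinearMap.toSpanSingleton ℂ c).restrictScalars ℝ).det = normSq c := by
  have h : (((ContinuousLinearMap.toSpanSingleton ℂ c).restrictScalars ℝ : ℂ →L[ℝ] ℂ) : ℂ →ₗ[ℝ] ℂ)
      = Algebra.lmul ℝ ℂ c := by
    ext z; simp [mul_comm]
  rw [ContinuousLinearMap.det, h, ← Algebra.norm_apply, Algebra.norm_complex_apply]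

theorem integral_image_eq_integral_normSq_deriv_smul {G : Type*} [NormedAddCommGroup G]
    [NormedSpace ℝ G] {s : Set ℂ} (hs : MeasurableSet s) {ψ ψ' : ℂ → ℂ}
    (hψ : ∀ w ∈ s, HasDerivAt ψ (ψ' w) w) (hinj : InjOn ψ s) (f : ℂ → G) :
    ∫ z in ψ '' s, f z = ∫ w in s, normSq (ψ' w) • f (ψ w) := by
  rw [integral_image_eq_integral_abs_det_fderiv_smul volume hs
    (fun w hw => ((hψ w hw).hasFDerivAt.restrictScalars ℝ).hasFDerivWithinAt) hinj]
  simp_rw [det_restrictScalars_toSpanSingleton, abs_of_nonneg (normSq_nonneg _)]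

theorem integral_energy_comp_phi {K : ℕ} {u : ℂ → EuclideanSpace ℝ (Fin K)} {V : Set ℂ}
    (hV : IsOpen V) (hDV : closedBall (0 : ℂ) 1 ⊆ V) (hu : ContDiffOn ℝ 1 u V) (α : ℝ) {β : ℂ}
    (hβ : ‖β‖ < 1) :
    ∫ z in ball (0 : ℂ) 1, (1 + gradSq (fun w => u (phi β w)) z) ^ α
      = ∫ w in ball (0 : ℂ) 1,
          normSq (phiDeriv (-β) w) * (1 + gradSq u w / normSq (phiDeriv (-β) w)) ^ α := by
  have hβ' : ‖-β‖ < 1 := by rwa [norm_neg]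
  have hψ (w) (hw : w ∈ ball (0 : ℂ) 1) : HasDerivAt (phi (-β)) (phiDeriv (-β) w) w :=
    hasDerivAt_phi _ (one_sub_conj_mul_ne_zero hβ' (mem_ball_zero_iff.1 hw).le)
  have hcov := integral_image_eq_integral_normSq_deriv_smul measurableSet_ball hψ
    (bijOn_phi hβ').injOn fun z => (1 + gradSq (fun w => u (phi β w)) z) ^ α
  rw [(bijOn_phi hβ').image_eq] at hcov
  rw [hcov]
  refine setIntegral_congr_fun measurableSet_ball fun w hw => ?_
  have hinv : LeftInvOn (phi β) (phi (-β)) (ball 0 1) := by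
    simpa using (invOn_phi hβ').1
  have hφ : HasDerivAt (phi β) (phiDeriv β (phi (-β) w)) (phi (-β) w) :=
    hasDerivAt_phi β (one_sub_conj_mul_ne_zero hβ (mem_ball_zero_iff.1 (mapsTo_phi hβ' hw)).le)
  have hud : DifferentiableAt ℝ u (phi β (phi (-β) w)) := by
    rw [hinv hw]
    exact (hu.contDiffAt (hV.mem_nhds (hDV (ball_subset_closedBall hw)))).differentiableAt
      one_ne_zero
  -- differentiate `phi β ∘ phi (-β) = id` near `w`
  have hprod : phiDeriv β (phi (-β) w) * phiDeriv (-β) w = 1 :=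
    (hφ.comp w (hψ w hw)).unique ((hasDerivAt_id w).congr_of_eventuallyEq
      (Filter.eventually_of_mem (isOpen_ball.mem_nhds hw) hinv))
  have hnormSq : normSq (phiDeriv β (phi (-β) w)) = (normSq (phiDeriv (-β) w))⁻¹ :=
    eq_inv_of_mul_eq_one_left (by rw [← normSq_mul, hprod, normSq_one])
  rw [gradSq_comp_of_hasDerivAt u hφ hud, hinv hw, hnormSq, smul_eq_mul, inv_mul_eq_div]

theorem HasDerivAt.mul_one_add_div_rpow {r : ℝ → ℝ} {r' t g α : ℝ} (hr : HasDerivAt r r' t)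
    (hpos : 0 < r t) (hg : 0 ≤ g) :
    HasDerivAt (fun s => r s * (1 + g / r s) ^ α)
      (r' * ((1 + g / r t) ^ α - α * (1 + g / r t) ^ (α - 1) * (g / r t))) t := by
  have hbase : 0 < 1 + g / r t := by positivity
  refine (hr.mul ((((hasDerivAt_const t g).fun_div hr hpos.ne').const_add 1).rpow_const
    (Or.inl hbase.ne'))).congr_deriv ?_
  field_simp
  ring

section ParametricIntegral

variable {E G : Type*} [TopologicalSpace E] [T2Space E] [MeasurableSpace E]
  [OpensMeasurableSpace E] [NormedAddCommGroup G] [NormedSpace ℝ G]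
  [SecondCountableTopologyEither E G] {μ : Measure E} [IsFiniteMeasureOnCompacts μ] {s K : Set E}

theorem hasDerivAt_setIntegral_of_continuousOn (hs : MeasurableSet s) (hK : IsCompact K)
    (hsK : s ⊆ K) {F F' : ℝ → E → G} {t₀ δ : ℝ} (hδ : 0 < δ)
    (hF : ContinuousOn (Function.uncurry F) (closedBall t₀ δ ×ˢ K))
    (hF' : ContinuousOn (Function.uncurry F') (closedBall t₀ δ ×ˢ K))
    (hderiv : ∀ t ∈ ball t₀ δ, ∀ w ∈ s, HasDerivAt (F · w) (F' t w) t) :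
    HasDerivAt (fun t => ∫ w in s, F t w ∂μ) (∫ w in s, F' t₀ w ∂μ) t₀ := by
  have hslice {H : ℝ → E → G} (hH : ContinuousOn (Function.uncurry H) (closedBall t₀ δ ×ˢ K))
      {t : ℝ} (ht : t ∈ closedBall t₀ δ) : ContinuousOn (H t) K :=
    hH.comp (Continuous.continuousOn (Continuous.prodMk_right t)) fun _ hw => ⟨ht, hw⟩
  have ht₀ : t₀ ∈ closedBall t₀ δ := mem_closedBall_self hδ.le
  obtain ⟨C, hC⟩ := (isCompact_closedBall t₀ δ).prod hK |>.exists_bound_of_continuousOn hF'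
  refine (hasDerivAt_integral_of_dominated_loc_of_deriv_le (bound := fun _ => C)
    (ball_mem_nhds t₀ hδ) ?_ ?_ ?_ ?_ ?_ ?_).2
  · filter_upwards [ball_mem_nhds t₀ hδ] with t ht
    exact ((hslice hF (ball_subset_closedBall ht)).mono hsK).aestronglyMeasurable hs
  · exact ((hslice hF ht₀).integrableOn_compact hK).mono_set hsK
  · exact ((hslice hF' ht₀).mono hsK).aestronglyMeasurable hs
  · filter_upwards [ae_restrict_mem hs] with w hw t ht
    exact hC (t, w) ⟨ball_subset_closedBall ht, hsK hw⟩
  · exact integrableOn_const ((measure_mono hsK).trans_lt hK.measure_lt_top).ne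
  · filter_upwards [ae_restrict_mem hs] with w hw t ht
    exact hderiv t ht w hw

theorem hasDerivAt_setIntegral_mul_one_add_div_rpow (hs : MeasurableSet s) (hK : IsCompact K)
    (hsK : s ⊆ K) {r r' : ℝ → E → ℝ} {g : E → ℝ} {α t₀ δ : ℝ} (hδ : 0 < δ)
    (hr : ContinuousOn (Function.uncurry r) (closedBall t₀ δ ×ˢ K))
    (hr' : ContinuousOn (Function.uncurry r') (closedBall t₀ δ ×ˢ K))
    (hr_pos : ∀ t ∈ closedBall t₀ δ, ∀ w ∈ K, 0 < r t w)
    (hg : ContinuousOn g K) (hg_nonneg : ∀ w ∈ K, 0 ≤ g w)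
    (hderiv : ∀ t ∈ ball t₀ δ, ∀ w ∈ s, HasDerivAt (r · w) (r' t w) t) :
    HasDerivAt (fun t => ∫ w in s, r t w * (1 + g w / r t w) ^ α ∂μ)
      (∫ w in s, r' t₀ w * ((1 + g w / r t₀ w) ^ α
        - α * (1 + g w / r t₀ w) ^ (α - 1) * (g w / r t₀ w)) ∂μ) t₀ := by
  set S := closedBall t₀ δ ×ˢ K
  have hgS : ContinuousOn (fun p : ℝ × E => g p.2) S :=
    hg.comp continuous_snd.continuousOn fun _ hp => hp.2
  have hquot : ContinuousOn (fun p : ℝ × E => g p.2 / r p.1 p.2) S :=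
    hgS.div hr fun p hp => (hr_pos p.1 hp.1 p.2 hp.2).ne'
  have hbase (β : ℝ) : ContinuousOn (fun p : ℝ × E => (1 + g p.2 / r p.1 p.2) ^ β) S :=
    (continuousOn_const.add hquot).rpow_const fun p hp => Or.inl
      (add_pos_of_pos_of_nonneg one_pos
        (div_nonneg (hg_nonneg p.2 hp.2) (hr_pos p.1 hp.1 p.2 hp.2).le)).ne'
  refine hasDerivAt_setIntegral_of_continuousOn (F := fun t w => r t w * (1 + g w / r t w) ^ α)
    (F' := fun t w => r' t w * ((1 + g w / r t w) ^ α
      - α * (1 + g w / r t w) ^ (α - 1) * (g w / r t w)))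
    hs hK hsK hδ (hr.mul (hbase α))
    (hr'.mul ((hbase α).sub ((continuousOn_const.mul (hbase (α - 1))).mul hquot)))
    fun t ht w hw => (hderiv t ht w hw).mul_one_add_div_rpow
      (hr_pos t (ball_subset_closedBall ht) w (hsK hw)) (hg_nonneg w (hsK hw))

end ParametricIntegral

/-- `|1 + t c̄ w|²`, the squared denominator of `phiDeriv (-(t • c)) w`, expanded as a polynomial
in `t`. -/
noncomputable def moebiusDenom (c : ℂ) (t : ℝ) (w : ℂ) : ℝ :=
  1 + 2 * t * (conj c * w).re + t ^ 2 * normSq (conj c * w)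

theorem normSq_one_sub_conj_neg_smul_mul (c : ℂ) (t : ℝ) (w : ℂ) :
    normSq (1 - conj (-(t • c)) * w) = moebiusDenom c t w := by
  rw [moebiusDenom, map_neg, real_smul, map_mul, conj_ofReal, neg_mul, sub_neg_eq_add, mul_assoc]
  simp only [normSq_apply, add_re, add_im, one_re, one_im, re_ofReal_mul, im_ofReal_mul]
  ring

theorem moebiusDenom_pos {c w : ℂ} {t : ℝ} (ht : ‖t • c‖ < 1) (hw : ‖w‖ ≤ 1) :
    0 < moebiusDenom c t w := by
  rw [← normSq_one_sub_conj_neg_smul_mul]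
  exact normSq_pos.2 (one_sub_conj_mul_ne_zero (by rwa [norm_neg]) hw)

theorem hasDerivAt_moebiusDenom (c w : ℂ) (t : ℝ) :
    HasDerivAt (moebiusDenom c · w) (2 * (conj c * w).re + 2 * t * normSq (conj c * w)) t := by
  refine ((((hasDerivAt_id t).const_mul 2).mul_const (conj c * w).re).const_add 1).add
    ((hasDerivAt_pow 2 t).mul_const (normSq (conj c * w))) |>.congr_deriv ?_
  norm_num

theorem normSq_phiDeriv_neg_smul (c : ℂ) (t : ℝ) (w : ℂ) :
    normSq (phiDeriv (-(t • c)) w) = ((1 - t ^ 2 * normSq c) / moebiusDenom c t w) ^ 2 := by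
  have hnum : (1 : ℂ) - normSq (-(t • c)) = ((1 - t ^ 2 * normSq c : ℝ) : ℂ) := by
    rw [normSq_neg, real_smul, normSq_mul, normSq_ofReal]; push_cast; ring
  rw [phiDeriv, hnum, normSq_div, map_pow, normSq_ofReal, normSq_one_sub_conj_neg_smul_mul,
    div_pow, ← sq]

/-- `∂ₜ |φ'_{-tc}(w)|²`, computed from `normSq_phiDeriv_neg_smul`. -/
noncomputable def jacobianRate (c : ℂ) (t : ℝ) (w : ℂ) : ℝ :=
  2 * ((1 - t ^ 2 * normSq c) / moebiusDenom c t w) *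
    ((-(2 * t * normSq c) * moebiusDenom c t w -
      (1 - t ^ 2 * normSq c) * (2 * (conj c * w).re + 2 * t * normSq (conj c * w))) /
      moebiusDenom c t w ^ 2)

theorem hasDerivAt_normSq_phiDeriv_neg_smul {c w : ℂ} {t : ℝ} (ht : ‖t • c‖ < 1) (hw : ‖w‖ ≤ 1) :
    HasDerivAt (fun s : ℝ => normSq (phiDeriv (-(s • c)) w)) (jacobianRate c t w) t := by
  have hnum : HasDerivAt (fun s : ℝ => 1 - s ^ 2 * normSq c) (-(2 * t * normSq c)) t := by
    simpa using ((hasDerivAt_pow 2 t).mul_const (normSq c)).const_sub 1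
  simp_rw [normSq_phiDeriv_neg_smul]
  refine ((hnum.fun_div (hasDerivAt_moebiusDenom c w t)
    (moebiusDenom_pos ht hw).ne').fun_pow 2).congr_deriv ?_
  rw [jacobianRate]
  norm_num

theorem jacobianRate_zero (c w : ℂ) : jacobianRate c 0 w = -4 * (conj c * w).re := by
  simp [jacobianRate, moebiusDenom]
  ring

theorem continuousOn_normSq_phiDeriv_neg_smul (c : ℂ) {S : Set (ℝ × ℂ)}
    (hS : ∀ p ∈ S, ‖p.1 • c‖ < 1 ∧ ‖p.2‖ ≤ 1) :
    ContinuousOn (fun p : ℝ × ℂ => normSq (phiDeriv (-(p.1 • c)) p.2)) S := by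
  have hden (p) (hp : p ∈ S) : (1 - conj (-(p.1 • c)) * p.2) ^ 2 ≠ 0 :=
    pow_ne_zero 2 (one_sub_conj_mul_ne_zero (by rw [norm_neg]; exact (hS p hp).1) (hS p hp).2)
  unfold phiDeriv
  fun_prop (disch := assumption)

theorem continuousOn_jacobianRate (c : ℂ) {S : Set (ℝ × ℂ)}
    (hS : ∀ p ∈ S, ‖p.1 • c‖ < 1 ∧ ‖p.2‖ ≤ 1) :
    ContinuousOn (fun p : ℝ × ℂ => jacobianRate c p.1 p.2) S := by
  have hden (p) (hp : p ∈ S) : moebiusDenom c p.1 p.2 ≠ 0 :=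
    (moebiusDenom_pos (hS p hp).1 (hS p hp).2).ne'
  have hden_sq (p) (hp : p ∈ S) : moebiusDenom c p.1 p.2 ^ 2 ≠ 0 := pow_ne_zero 2 (hden p hp)
  unfold jacobianRate moebiusDenom at *
  fun_prop (disch := assumption)

theorem hasDerivAt_energy_comp_phi_smul {K : ℕ} {u : ℂ → EuclideanSpace ℝ (Fin K)} {V : Set ℂ}
    (hV : IsOpen V) (hDV : closedBall (0 : ℂ) 1 ⊆ V) (hu : ContDiffOn ℝ 1 u V) (α : ℝ) (c : ℂ) :
    HasDerivAt
      (fun t : ℝ => ∫ z in ball (0 : ℂ) 1, (1 + gradSq (fun w => u (phi (t • c) w)) z) ^ α)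
      (4 * ∫ w in ball (0 : ℂ) 1, (conj c * w).re *
        (-(1 + gradSq u w) ^ α + α * (1 + gradSq u w) ^ (α - 1) * gradSq u w)) 0 := by
  obtain ⟨δ, hδ, hδc⟩ : ∃ δ > 0, closedBall (0 : ℝ) δ ⊆ {t : ℝ | ‖t • c‖ < 1} :=
    nhds_basis_closedBall.mem_iff.1 <|
      (isOpen_lt (by fun_prop) continuous_const).mem_nhds (by simp)
  have hS (p : ℝ × ℂ) (hp : p ∈ closedBall 0 δ ×ˢ closedBall 0 1) : ‖p.1 • c‖ < 1 ∧ ‖p.2‖ ≤ 1 :=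
    ⟨hδc hp.1, mem_closedBall_zero_iff.1 hp.2⟩
  have hvar := hasDerivAt_setIntegral_mul_one_add_div_rpow (μ := volume) (α := α)
    measurableSet_ball (isCompact_closedBall 0 1) ball_subset_closedBall hδ
    (r := fun t w => normSq (phiDeriv (-(t • c)) w)) (r' := jacobianRate c)
    (continuousOn_normSq_phiDeriv_neg_smul c hS) (continuousOn_jacobianRate c hS)
    (fun t ht w hw => normSq_pos.2 <| phiDeriv_ne_zero
      (normSq_ne_one_of_norm_lt_one (by rw [norm_neg]; exact hδc ht))
      (one_sub_conj_mul_ne_zero (by rw [norm_neg]; exact hδc ht) (mem_closedBall_zero_iff.1 hw)))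
    ((continuousOn_gradSq hV hu).mono hDV) (fun w _ => gradSq_nonneg u w)
    (fun t ht w hw => hasDerivAt_normSq_phiDeriv_neg_smul
      (hδc (ball_subset_closedBall ht)) (mem_ball_zero_iff.1 hw).le)
  have henergy :
      (fun t : ℝ => ∫ z in ball (0 : ℂ) 1, (1 + gradSq (fun w => u (phi (t • c) w)) z) ^ α)
        =ᶠ[nhds 0] fun t => ∫ w in ball (0 : ℂ) 1, normSq (phiDeriv (-(t • c)) w) *
          (1 + gradSq u w / normSq (phiDeriv (-(t • c)) w)) ^ α :=
    Filter.eventually_of_mem (closedBall_mem_nhds 0 hδ) fun t ht =>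
      integral_energy_comp_phi hV hDV hu α (hδc ht)
  refine (hvar.congr_of_eventuallyEq henergy).congr_deriv ?_
  rw [← integral_const_mul]
  refine setIntegral_congr_fun measurableSet_ball fun w _ => ?_
  simp only [zero_smul, neg_zero, normSq_phiDeriv_zero, jacobianRate_zero, div_one]
  ring

theorem integral_ofReal_mul_eq_zero {μ : Measure ℂ} {k : ℂ → ℝ}
    (hk : Integrable (fun z => (k z : ℂ) * z) μ) (h : ∀ c : ℂ, ∫ z, (conj c * z).re * k z ∂μ = 0) :
    ∫ z, (k z : ℂ) * z ∂μ = 0 := by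
  set I := ∫ z, (k z : ℂ) * z ∂μ
  -- test the vanishing of all real parts against `c = I` itself
  have hI : normSq I = ∫ z, (conj I * z).re * k z ∂μ :=
    calc normSq I = (conj I * I).re := by rw [← normSq_eq_conj_mul_self, ofReal_re]
      _ = ∫ z, (conj I * ((k z : ℂ) * z)).re ∂μ := by
        rw [← integral_const_mul, ← RCLike.re_to_complex, ← integral_re (hk.const_mul _)]; rfl
      _ = ∫ z, (conj I * z).re * k z ∂μ := by
        congr 1; funext z; rw [mul_left_comm, re_ofReal_mul, mul_comm]
  rwa [h, normSq_eq_zero] at hI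

theorem stmt_6_general (K : ℕ) (u : ℂ → EuclideanSpace ℝ (Fin K)) (V : Set ℂ)
    (hV : IsOpen V) (hDV : Metric.closedBall (0 : ℂ) 1 ⊆ V) (hu : ContDiffOn ℝ 1 u V)
    (α : ℝ)
    (hcrit : ∀ β : ℝ → ℂ, ∀ β' : ℂ, HasDerivAt β β' 0 → β 0 = 0 →
      HasDerivAt
        (fun t : ℝ =>
          ∫ z in Metric.ball (0 : ℂ) 1, (1 + gradSq (fun w => u (phi (β t) w)) z) ^ α)
        0 0) :
    (∫ z in Metric.ball (0 : ℂ) 1,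
        ((-(1 + gradSq u z) ^ α + α * (1 + gradSq u z) ^ (α - 1) * gradSq u z : ℝ) : ℂ)
          * z) = 0 := by
  have hg := (continuousOn_gradSq hV hu).mono hDV
  have hpos (z : ℂ) : 1 + gradSq u z ≠ 0 := by have := gradSq_nonneg u z; positivity
  refine integral_ofReal_mul_eq_zero ?_ fun c => ?_
  · have hbase : ContinuousOn (fun z => 1 + gradSq u z) (closedBall 0 1) :=
      continuousOn_const.add hg
    have hk : ContinuousOn (fun z => -(1 + gradSq u z) ^ α
        + α * (1 + gradSq u z) ^ (α - 1) * gradSq u z) (closedBall 0 1) :=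
      (hbase.rpow_const fun z _ => Or.inl (hpos z)).neg.add
        ((continuousOn_const.mul (hbase.rpow_const fun z _ => Or.inl (hpos z))).mul hg)
    exact ((continuous_ofReal.comp_continuousOn hk).mul continuousOn_id).integrableOn_compact
      (isCompact_closedBall 0 1) |>.mono_set ball_subset_closedBall
  · have hβ : HasDerivAt (fun t : ℝ => t • c) c 0 := by
      simpa using (hasDerivAt_id (0 : ℝ)).smul_const c
    simpa using (hasDerivAt_energy_comp_phi_smul hV hDV hu α c).unique
      (hcrit _ c hβ (zero_smul ℝ c))

/-- If `u` is critical for the `α`-energy under inner variations by disk automorphisms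
(i.e. for every variation `β` with `β 0 = 0` the function `t ↦ E_α(u ∘ φ_{β t})` has
derivative `0` at `t = 0`), then
`∫_D ( −(1+|∇u|²)^α + α(1+|∇u|²)^{α−1}|∇u|² )·z dA = 0`.  (Lemma 4.1.) -/
theorem stmt_6 (K : ℕ) (hK : 1 ≤ K) (u : ℂ → EuclideanSpace ℝ (Fin K)) (V : Set ℂ)
    (hV : IsOpen V) (hDV : Metric.closedBall (0 : ℂ) 1 ⊆ V) (hu : ContDiffOn ℝ 1 u V)
    (α : ℝ) (hα : 1 < α)
    (hcrit : ∀ β : ℝ → ℂ, ∀ β' : ℂ, HasDerivAt β β' 0 → β 0 = 0 →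
      HasDerivAt
        (fun t : ℝ =>
          ∫ z in Metric.ball (0 : ℂ) 1, (1 + gradSq (fun w => u (phi (β t) w)) z) ^ α)
        0 0) :
    (∫ z in Metric.ball (0 : ℂ) 1,
        ((-(1 + gradSq u z) ^ α + α * (1 + gradSq u z) ^ (α - 1) * gradSq u z : ℝ) : ℂ)
          * z) = 0 :=
  stmt_6_general K u V hV hDV hu α hcrit
end

section
/- For every real α with 1 ≤ α ≤ 2 and every real s ≥ 0, one has (α/2)(α − 1)·s²·(1 + s)^{α−2} ≤ −(1 + s)^α + 1 + α(1 + s)^{α−1}·s ≤ (α − 1)·s²·(1 + s)^{α−2}. -/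
/-!
The middle term `F(s)` is the gap at `1` between `t ↦ t^α` and its tangent line at `1 + s`, so
`F 0 = 0` and `F'(s) = α(α-1) s (1+s)^(α-2) = α(α-1) s (1+s)^(α-3) (1+s)`, while `c s² (1+s)^(α-2)`
vanishes at `0` and has derivative `c s (1+s)^(α-3) (2 + α s)`. For `1 ≤ α ≤ 2` these derivatives
compare in the required direction for `c = α(α-1)/2` and `c = α-1`, and integrating from `0`
gives both bounds.
-/

open Set

theorem le_of_hasDerivAt_le {f g f' g' : ℝ → ℝ} {a b : ℝ} (hab : a ≤ b)
    (hf : ∀ x ∈ Icc a b, HasDerivAt f (f' x) x) (hg : ∀ x ∈ Icc a b, HasDerivAt g (g' x) x)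
    (ha : f a ≤ g a) (hderiv : ∀ x ∈ Ico a b, f' x ≤ g' x) : f b ≤ g b :=
  image_le_of_deriv_right_le_deriv_boundary
    (fun x hx ↦ (hf x hx).continuousAt.continuousWithinAt)
    (fun x hx ↦ (hf x (Ico_subset_Icc_self hx)).hasDerivWithinAt) ha
    (fun x hx ↦ (hg x hx).continuousAt.continuousWithinAt)
    (fun x hx ↦ (hg x (Ico_subset_Icc_self hx)).hasDerivWithinAt) hderiv
    (right_mem_Icc.2 hab)

theorem hasDerivAt_one_add_rpow (β : ℝ) {x : ℝ} (hx : 0 < 1 + x) :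
    HasDerivAt (fun y : ℝ ↦ (1 + y) ^ β) (β * (1 + x) ^ (β - 1)) x := by
  simpa [mul_comm] using ((hasDerivAt_id x).const_add 1).rpow_const (p := β) (Or.inl hx.ne')

noncomputable def rpowTangentGap (α s : ℝ) : ℝ := -(1 + s) ^ α + 1 + α * (1 + s) ^ (α - 1) * s

theorem hasDerivAt_rpowTangentGap (α : ℝ) {x : ℝ} (hx : 0 < 1 + x) :
    HasDerivAt (rpowTangentGap α) (α * (α - 1) * x * (1 + x) ^ (α - 3) * (1 + x)) x := by
  refine (((hasDerivAt_one_add_rpow α hx).neg.add_const 1).add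
    (((hasDerivAt_one_add_rpow (α - 1) hx).const_mul α).mul (hasDerivAt_id x))).congr_deriv ?_
  have h1 := Real.rpow_add_natCast hx.ne' (α - 3) 1
  have h2 := Real.rpow_add_natCast hx.ne' (α - 3) 2
  push_cast at h1 h2
  rw [sub_sub, one_add_one_eq_two, show α - 1 = α - 3 + 2 by ring,
    show α - 2 = α - 3 + 1 by ring, h1, h2]
  simp only [id_eq]
  ring

theorem hasDerivAt_mul_sq_mul_one_add_rpow (α c : ℝ) {x : ℝ} (hx : 0 < 1 + x) :
    HasDerivAt (fun y : ℝ ↦ c * y ^ 2 * (1 + y) ^ (α - 2))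
      (c * x * (1 + x) ^ (α - 3) * (2 + α * x)) x := by
  refine (((hasDerivAt_pow 2 x).const_mul c).mul
    (hasDerivAt_one_add_rpow (α - 2) hx)).congr_deriv ?_
  have h1 := Real.rpow_add_natCast hx.ne' (α - 3) 1
  push_cast at h1
  rw [show α - 2 - 1 = α - 3 by ring, show α - 2 = α - 3 + 1 by ring, h1]
  ring

/-- The pointwise Sacks–Uhlenbeck two-sided bound: for `1 ≤ α ≤ 2` and `s ≥ 0`,
`(α/2)(α−1)s²(1+s)^{α−2} ≤ −(1+s)^α + 1 + α(1+s)^{α−1}s ≤ (α−1)s²(1+s)^{α−2}`. -/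
theorem stmt_7 (α s : ℝ) (h1 : 1 ≤ α) (h2 : α ≤ 2) (hs : 0 ≤ s) :
    (α / 2) * (α - 1) * s ^ 2 * (1 + s) ^ (α - 2) ≤
      -(1 + s) ^ α + 1 + α * (1 + s) ^ (α - 1) * s ∧
    -(1 + s) ^ α + 1 + α * (1 + s) ^ (α - 1) * s ≤
      (α - 1) * s ^ 2 * (1 + s) ^ (α - 2) := by
  have hpos : ∀ x ∈ Icc 0 s, 0 < 1 + x := fun x hx ↦ by linarith [hx.1]
  have hk : ∀ x ∈ Ico 0 s, 0 ≤ (α - 1) * x * (1 + x) ^ (α - 3) := fun x hx ↦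
    mul_nonneg (mul_nonneg (sub_nonneg.2 h1) hx.1)
      (Real.rpow_nonneg (hpos x (Ico_subset_Icc_self hx)).le _)
  have hgap0 : rpowTangentGap α 0 = 0 := by simp [rpowTangentGap]
  -- with `k = (α-1) x (1+x)^(α-3)`, the derivatives differ by `k α x (2-α) / 2`, resp. `k (2-α)`
  constructor
  · refine le_of_hasDerivAt_le hs (fun x hx ↦ hasDerivAt_mul_sq_mul_one_add_rpow α _ (hpos x hx))
      (fun x hx ↦ hasDerivAt_rpowTangentGap α (hpos x hx)) (by simp [hgap0]) fun x hx ↦ ?_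
    linarith [mul_nonneg (hk x hx) (mul_nonneg (mul_nonneg (by linarith : (0:ℝ) ≤ α) hx.1)
      (by linarith : (0:ℝ) ≤ 2 - α))]
  · refine le_of_hasDerivAt_le hs (fun x hx ↦ hasDerivAt_rpowTangentGap α (hpos x hx))
      (fun x hx ↦ hasDerivAt_mul_sq_mul_one_add_rpow α _ (hpos x hx)) (by simp [hgap0])
      fun x hx ↦ ?_
    linarith [mul_nonneg (hk x hx) (by linarith : (0:ℝ) ≤ 2 - α)]
end
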